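/- Stokes' theorem for a rectangle (Green's theorem): for C¹ functions u, v on a neighborhood of the rectangle [a,b] × [c,d], the integral of (∂v/∂x − ∂u/∂y) over the rectangle equals the line integral of u dx + v dy over the (counterclockwise) boundary. -/

import Mathlib

open MeasureTheory Set
open scoped Interval

/-- Partial derivative with respect to `x` of a function on `ℝ²`. -/
noncomputable def pdx (f : ℝ × ℝ → ℝ) (z : ℝ × ℝ) : ℝ := fderiv ℝ f z (1, 0)

/-- Partial derivative with respect to `y` of a function on `ℝ²`. -/
noncomputable def pdy (f : ℝ × ℝ → ℝ) (z : ℝ × ℝ) : ℝ := fderiv ℝ f z (0, 1)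

/-!
Green's theorem for `u dx + v dy` is the divergence theorem on the rectangle for the vector
field `(v, -u)`. For C¹ data on an open set containing the closed rectangle, the partial
derivatives are continuous on the compact rectangle, hence integrable.
-/

theorem integral2_green_prod_of_hasFDerivAt_off_countable
    {E : Type*} [NormedAddCommGroup E] [NormedSpace ℝ E] {u v : ℝ × ℝ → E}
    {u' v' : ℝ × ℝ → ℝ × ℝ →L[ℝ] E} {a b c d : ℝ} {s : Set (ℝ × ℝ)} (hs : s.Countable)
    (hu : ContinuousOn u ([[a, b]] ×ˢ [[c, d]])) (hv : ContinuousOn v ([[a, b]] ×ˢ [[c, d]]))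
    (hu' : ∀ z ∈ Ioo (min a b) (max a b) ×ˢ Ioo (min c d) (max c d) \ s,
      HasFDerivAt u (u' z) z)
    (hv' : ∀ z ∈ Ioo (min a b) (max a b) ×ˢ Ioo (min c d) (max c d) \ s,
      HasFDerivAt v (v' z) z)
    (hi : IntegrableOn (fun z => v' z (1, 0) - u' z (0, 1)) ([[a, b]] ×ˢ [[c, d]])) :
    (∫ x in a..b, ∫ y in c..d, v' (x, y) (1, 0) - u' (x, y) (0, 1)) =
      (∫ x in a..b, u (x, c)) + (∫ y in c..d, v (b, y))
        - (∫ x in a..b, u (x, d)) - (∫ y in c..d, v (a, y)) := by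
  have hdiv := integral2_divergence_prod_of_hasFDerivAt_off_countable v (-u) v' (-u')
    a c b d s hs hv hu.neg hv' (fun z hz => (hu' z hz).neg) (by simpa [sub_eq_add_neg] using hi)
  simp only [Pi.neg_apply, neg_apply, ← sub_eq_add_neg,
    intervalIntegral.integral_neg] at hdiv
  rw [hdiv]
  abel

/-- Green's theorem for a rectangle: for `u, v` of class C¹ on an open neighborhood of
the rectangle `[a,b] × [c,d]`, the integral of `∂v/∂x − ∂u/∂y` over the rectangle
equals the line integral of `u dx + v dy` over the counterclockwise boundary. -/
theorem green_rectangle (U : Set (ℝ × ℝ)) (hU : IsOpen U)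
    (a b c d : ℝ) (hab : a ≤ b) (hcd : c ≤ d)
    (hsub : Set.Icc a b ×ˢ Set.Icc c d ⊆ U)
    (u v : ℝ × ℝ → ℝ) (hu : ContDiffOn ℝ 1 u U) (hv : ContDiffOn ℝ 1 v U) :
    (∫ x in a..b, ∫ y in c..d, (pdx v (x, y) - pdy u (x, y))) =
      (∫ x in a..b, u (x, c)) + (∫ y in c..d, v (b, y))
        - (∫ x in a..b, u (x, d)) - (∫ y in c..d, v (a, y)) := by
  have hrect : [[a, b]] ×ˢ [[c, d]] ⊆ U := by rwa [uIcc_of_le hab, uIcc_of_le hcd]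
  have hopen : Ioo (min a b) (max a b) ×ˢ Ioo (min c d) (max c d) \ ∅ ⊆ U := by
    rw [sdiff_empty]
    exact (prod_mono Ioo_subset_Icc_self Ioo_subset_Icc_self).trans hrect
  have hcurl : ContinuousOn (fun z => fderiv ℝ v z (1, 0) - fderiv ℝ u z (0, 1)) U :=
    ((hv.continuousOn_fderiv_of_isOpen hU le_rfl).clm_apply continuousOn_const).sub
      ((hu.continuousOn_fderiv_of_isOpen hU le_rfl).clm_apply continuousOn_const)
  exact integral2_green_prod_of_hasFDerivAt_off_countable countable_empty
    (hu.continuousOn.mono hrect) (hv.continuousOn.mono hrect)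
    (fun z hz => (hu.differentiableOn one_ne_zero).hasFDerivAt (hU.mem_nhds (hopen hz)))
    (fun z hz => (hv.differentiableOn one_ne_zero).hasFDerivAt (hU.mem_nhds (hopen hz)))
    ((hcurl.mono hrect).integrableOn_compact (isCompact_uIcc.prod isCompact_uIcc))
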